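/- Let f₁ > 0 and let y be a trigonometric polynomial of fundamental frequency f₁, y(t) = Σ_{n∈ℤ} c(n)·exp(i n f₁ t) with finitely many nonzero coefficients. For λ > 0 define the Shannon scalogram operator U_λ y (t) = |P_λ y(t)|², where P_λ keeps only the terms with λ < n f₁ ≤ 2λ; note that U_λ y is again a trigonometric polynomial of fundamental frequency f₁, so the operators can be composed. Suppose M ≥ 1 and the Fourier support of y is contained in {n ∈ ℤ : 1 ≤ n ≤ 2^M}, i.e., y has a finite bandwidth of M octaves above its fundamental f₁. Then for every integer m > M and all positive scales λ₁, …, λ_m, the iterated Shannon scalogram (U_{λ_m} ∘ ⋯ ∘ U_{λ_1}) y is identically zero. -/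

import Mathlib

/-!
A nonzero scalogram coefficient at frequency `d` is a product `p(n) · conj(p(n - d))` of two
band-projected coefficients, so `n f₁` and `(n - d) f₁` both lie in the octave `(l, 2l]`; hence
`(n - d) f₁ > l ≥ n f₁ / 2`, i.e. `2d < n`. Each scalogram therefore halves the upper end of the
Fourier support, and since the band `(l, 2l]` only contains positive frequencies, the scalogram of a
signal with nonpositive support vanishes. Starting from support in `[1, 2^M]`, after `M` layers the
support is nonpositive and layer `M + 1` is zero.
-/

open Complex

/-- Evaluation of the trigonometric polynomial of fundamental frequency `f₁` with
coefficients `c : ℤ → ℂ` (finitely many nonzero): `t ↦ Σ_n c(n)·exp(i n f₁ t)`. -/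
noncomputable def trigEval (f₁ : ℝ) (c : ℤ → ℂ) : ℝ → ℂ :=
  fun t => ∑ᶠ n : ℤ, c n * Complex.exp ((n : ℂ) * (f₁ : ℂ) * (t : ℂ) * Complex.I)

/-- Coefficients of the Shannon band projection `P_l`: keep only the terms whose
frequency `n·f₁` lies in the octave band `(l, 2l]`. -/
noncomputable def bandProjCoeff (f₁ l : ℝ) (c : ℤ → ℂ) : ℤ → ℂ :=
  fun n => if l < (n : ℝ) * f₁ ∧ (n : ℝ) * f₁ ≤ 2 * l then c n else 0

/-- Coefficients of the Shannon scalogram `U_l y = |P_l y|²` of the trigonometric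
polynomial with coefficients `c` : since
`|P_l y(t)|² = Σ_{n,k} p(n)·conj(p(k))·exp(i (n−k) f₁ t)` with `p = bandProjCoeff f₁ l c`,
the coefficient of the frequency `d·f₁` is `Σ_n p(n)·conj(p(n−d))`. -/
noncomputable def scalogramCoeff (f₁ l : ℝ) (c : ℤ → ℂ) : ℤ → ℂ :=
  fun d => ∑ᶠ n : ℤ,
    bandProjCoeff f₁ l c n * (starRingEnd ℂ) (bandProjCoeff f₁ l c (n - d))

/-- Coefficients of the iterated Shannon scalogram `(U_{λ_m} ∘ ⋯ ∘ U_{λ_1}) y`, where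
`lams = [λ₁, …, λ_m]` (the head is applied first). -/
noncomputable def scatteringIterCoeff (f₁ : ℝ) (lams : List ℝ) (c : ℤ → ℂ) : ℤ → ℂ :=
  lams.foldl (fun c l => scalogramCoeff f₁ l c) c

open Function

section Scalogram

variable {f₁ l : ℝ} {c : ℤ → ℂ}

@[simp]
lemma scatteringIterCoeff_cons (l : ℝ) (lams : List ℝ) (c : ℤ → ℂ) :
    scatteringIterCoeff f₁ (l :: lams) c = scatteringIterCoeff f₁ lams (scalogramCoeff f₁ l c) :=
  rfl

lemma bandProjCoeff_ne_zero_iff {n : ℤ} :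
    bandProjCoeff f₁ l c n ≠ 0 ↔ (l < n * f₁ ∧ n * f₁ ≤ 2 * l) ∧ c n ≠ 0 :=
  ite_ne_right_iff

lemma pos_of_bandProjCoeff_ne_zero (hf₁ : 0 < f₁) {n : ℤ} (h : bandProjCoeff f₁ l c n ≠ 0) :
    0 < n := by
  obtain ⟨⟨hl, hu⟩, -⟩ := bandProjCoeff_ne_zero_iff.mp h
  have : (0 : ℝ) < n * f₁ := by linarith
  exact_mod_cast (pos_of_mul_pos_left this hf₁.le)

lemma exists_bandProjCoeff_ne_zero_of_scalogramCoeff_ne_zero {d : ℤ}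
    (h : scalogramCoeff f₁ l c d ≠ 0) :
    ∃ n, bandProjCoeff f₁ l c n ≠ 0 ∧ bandProjCoeff f₁ l c (n - d) ≠ 0 := by
  by_contra! hc
  refine h (finsum_eq_zero_of_forall_eq_zero fun n => ?_)
  by_cases hn : bandProjCoeff f₁ l c n = 0
  · simp [hn]
  · simp [hc n hn]

lemma exists_two_mul_lt_of_scalogramCoeff_ne_zero (hf₁ : 0 < f₁) {d : ℤ}
    (h : scalogramCoeff f₁ l c d ≠ 0) : ∃ n, c n ≠ 0 ∧ 2 * d < n := by
  obtain ⟨n, hn, hnd⟩ := exists_bandProjCoeff_ne_zero_of_scalogramCoeff_ne_zero h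
  obtain ⟨⟨-, hu⟩, hcn⟩ := bandProjCoeff_ne_zero_iff.mp hn
  obtain ⟨⟨hl, -⟩, -⟩ := bandProjCoeff_ne_zero_iff.mp hnd
  refine ⟨n, hcn, ?_⟩
  have : (0 : ℝ) < (n - 2 * d : ℤ) * f₁ := by push_cast at hl ⊢; linarith
  have : 0 < n - 2 * d := by exact_mod_cast pos_of_mul_pos_left this hf₁.le
  omega

lemma support_scalogramCoeff_subset_Iio (hf₁ : 0 < f₁) {B : ℤ} (hc : support c ⊆ Set.Iic (2 * B)) :
    support (scalogramCoeff f₁ l c) ⊆ Set.Iio B := fun d hd => by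
  obtain ⟨n, hcn, hdn⟩ := exists_two_mul_lt_of_scalogramCoeff_ne_zero hf₁ hd
  have : n ≤ 2 * B := hc hcn
  exact Set.mem_Iio.mpr (by omega)

lemma scalogramCoeff_eq_zero_of_support_subset_Iic_zero (hf₁ : 0 < f₁)
    (hc : support c ⊆ Set.Iic 0) : scalogramCoeff f₁ l c = 0 := by
  funext d
  by_contra hd
  obtain ⟨n, hn, -⟩ := exists_bandProjCoeff_ne_zero_of_scalogramCoeff_ne_zero hd
  have hn_nonpos : n ≤ 0 := hc (bandProjCoeff_ne_zero_iff.mp hn).2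
  have hn_pos : 0 < n := pos_of_bandProjCoeff_ne_zero hf₁ hn
  omega

@[simp]
lemma scalogramCoeff_zero : scalogramCoeff f₁ l 0 = 0 := by
  funext d
  simp [scalogramCoeff, bandProjCoeff]

@[simp]
lemma scatteringIterCoeff_zero (lams : List ℝ) : scatteringIterCoeff f₁ lams 0 = 0 := by
  induction lams with
  | nil => rfl
  | cons l lams ih => rw [scatteringIterCoeff_cons, scalogramCoeff_zero, ih]

theorem scatteringIterCoeff_eq_zero_of_support_subset_Iio_two_pow (hf₁ : 0 < f₁) :
    ∀ {lams : List ℝ} {c : ℤ → ℂ} {k : ℕ}, k < lams.length →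
      support c ⊆ Set.Iio (2 ^ k) → scatteringIterCoeff f₁ lams c = 0
  | [], _, _, hk, _ => absurd hk (Nat.not_lt_zero _)
  | l :: lams, c, 0, _, hc => by
    rw [scatteringIterCoeff_cons, scalogramCoeff_eq_zero_of_support_subset_Iic_zero hf₁
      fun n hn => Int.lt_add_one_iff.mp (hc hn), scatteringIterCoeff_zero]
  | l :: lams, c, k + 1, hk, hc => by
    rw [pow_succ'] at hc
    rw [scatteringIterCoeff_cons]
    exact scatteringIterCoeff_eq_zero_of_support_subset_Iio_two_pow hf₁
      (Nat.lt_of_succ_lt_succ hk)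
      (support_scalogramCoeff_subset_Iio hf₁ (hc.trans Set.Iio_subset_Iic_self))

end Scalogram

theorem scattering_depth_le_bandwidth
    (f₁ : ℝ) (hf₁ : 0 < f₁) (c : ℤ → ℂ)
    (M : ℕ) (hM : 1 ≤ M)
    (hsupp : ∀ n : ℤ, c n ≠ 0 → 1 ≤ n ∧ n ≤ 2 ^ M)
    (lams : List ℝ) (hlen : M < lams.length) :
    ∀ t : ℝ, trigEval f₁ (scatteringIterCoeff f₁ lams c) t = 0 := by
  obtain ⟨M, rfl⟩ := Nat.exists_eq_add_of_le' hM
  obtain ⟨l, lams, rfl⟩ := List.exists_cons_of_length_pos (by omega : 0 < lams.length)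
  have hc : support c ⊆ Set.Iic (2 * 2 ^ M) := fun n hn => by
    simpa [pow_succ'] using (hsupp n hn).2
  have hzero : scatteringIterCoeff f₁ lams (scalogramCoeff f₁ l c) = 0 :=
    scatteringIterCoeff_eq_zero_of_support_subset_Iio_two_pow hf₁
      (Nat.lt_of_succ_lt_succ hlen) (support_scalogramCoeff_subset_Iio hf₁ hc)
  simp [hzero, trigEval]
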